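/- Multiclass alignment loss formula: for labels y_i ∈ {1,…,L} with λ_{ij} = 1 if y_i = y_j and −1 otherwise, (1/(n(n−1))) Σ_{i≠j} (1 − λ_{ij} cos(ω·(x_i − x_j)))/2 = n/(2(n−1)) − (1/(2n(n−1)))·[ 2 Σ_{y=1}^L (c_y² + s_y²) − (Σ_{y=1}^L c_y)² − (Σ_{y=1}^L s_y)² ], where c_y = Σ_{x∈S_y} cos(ω·x) and s_y = Σ_{x∈S_y} sin(ω·x). -/
import Mathlib

open Finset Real

theorem multiclass_alignment_loss_formula
    {d n L : ℕ} (hn : 2 ≤ n)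
    (x : Fin n → Fin d → ℝ) (y : Fin n → Fin L) (ω : Fin d → ℝ)
    (c s : Fin L → ℝ)
    (hc : ∀ l, c l = ∑ i ∈ univ.filter (fun i => y i = l), Real.cos (∑ k, ω k * x i k))
    (hs : ∀ l, s l = ∑ i ∈ univ.filter (fun i => y i = l), Real.sin (∑ k, ω k * x i k)) :
    (1 / (n * (n - 1) : ℝ)) *
      ∑ i, ∑ j, (if i ≠ j then
        (1 - (if y i = y j then (1:ℝ) else -1) *
          Real.cos (∑ k, ω k * (x i k - x j k))) / 2 else 0) =
    n / (2 * (n - 1)) - (1 / (2 * n * (n - 1))) *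
      (2 * ∑ l, (c l ^ 2 + s l ^ 2) - (∑ l, c l) ^ 2 - (∑ l, s l) ^ 2) := by
  have hn0 : (n:ℝ) ≠ 0 := Nat.cast_ne_zero.mpr (by omega)
  have hn2 : (2:ℝ) ≤ (n:ℝ) := by exact_mod_cast hn
  have hn1 : (n:ℝ) - 1 ≠ 0 := by linarith
  set f : Fin n → ℝ := fun i => ∑ k, ω k * x i k with hf
  set C := ∑ i, Real.cos (f i) with hC
  set Sn := ∑ i, Real.sin (f i) with hSn
  set Q := ∑ i, ∑ j, (if y i = y j then
      Real.cos (f i)*Real.cos (f j) + Real.sin (f i)*Real.sin (f j) else (0:ℝ)) with hQ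
  have hcos : ∀ i j : Fin n, Real.cos (∑ k, ω k * (x i k - x j k)) =
      Real.cos (f i) * Real.cos (f j) + Real.sin (f i) * Real.sin (f j) := by
    intro i j
    have h : (∑ k, ω k * (x i k - x j k)) = f i - f j := by
      simp [hf, mul_sub, Finset.sum_sub_distrib]
    rw [h, Real.cos_sub]
  -- rewrite c, s as full sums with ite
  have hc' : ∀ l, c l = ∑ i, (if y i = l then Real.cos (f i) else 0) := by
    intro l; rw [hc l, Finset.sum_filter]
  have hs' : ∀ l, s l = ∑ i, (if y i = l then Real.sin (f i) else 0) := by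
    intro l; rw [hs l, Finset.sum_filter]
  have hsumc : ∑ l, c l = C := by
    simp only [hc']
    rw [Finset.sum_comm]
    simp [hC]
  have hsums : ∑ l, s l = Sn := by
    simp only [hs']
    rw [Finset.sum_comm]
    simp [hSn]
  have hQeq : ∑ l, (c l ^ 2 + s l ^ 2) = Q := by
    have key : ∀ (a b : Fin n → ℝ), ∑ l, (∑ i, if y i = l then a i else 0) * (∑ j, if y j = l then b j else 0)
        = ∑ i, ∑ j, (if y i = y j then a i * b j else 0) := by
      intro a b
      have expand : ∀ l : Fin L, (∑ i, if y i = l then a i else 0) * (∑ j, if y j = l then b j else 0)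
          = ∑ i, ∑ j, ((if y i = l then a i else 0) * (if y j = l then b j else 0)) := by
        intro l; rw [Finset.sum_mul_sum]
      simp only [expand]
      rw [Finset.sum_comm]
      refine Finset.sum_congr rfl fun i _ => ?_
      rw [Finset.sum_comm]
      refine Finset.sum_congr rfl fun j _ => ?_
      by_cases hyy : y i = y j
      · rw [hyy]; simp [Finset.sum_ite_eq']
      · simp only [ite_mul, mul_ite, mul_zero, zero_mul]
        rw [Finset.sum_eq_zero]
        · simp [hyy]
        · intro l _
          by_cases h1 : y i = l <;> by_cases h2 : y j = l <;> simp_all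
    have : ∑ l, (c l ^ 2 + s l ^ 2)
        = (∑ l, (∑ i, if y i = l then Real.cos (f i) else 0) * (∑ j, if y j = l then Real.cos (f j) else 0))
        + (∑ l, (∑ i, if y i = l then Real.sin (f i) else 0) * (∑ j, if y j = l then Real.sin (f j) else 0)) := by
      rw [← Finset.sum_add_distrib]
      refine Finset.sum_congr rfl fun l _ => ?_
      rw [hc' l, hs' l]; ring
    rw [this, key, key, hQ, ← Finset.sum_add_distrib]
    refine Finset.sum_congr rfl fun i _ => ?_
    rw [← Finset.sum_add_distrib]
    refine Finset.sum_congr rfl fun j _ => ?_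
    by_cases hyy : y i = y j <;> simp [hyy]
  have hCC : ∑ i, ∑ j, Real.cos (f i) * Real.cos (f j) = C^2 := by
    simp only [← Finset.mul_sum]
    rw [← Finset.sum_mul, hC]; ring
  have hSS : ∑ i, ∑ j, Real.sin (f i) * Real.sin (f j) = Sn^2 := by
    simp only [← Finset.mul_sum]
    rw [← Finset.sum_mul, hSn]; ring
  have hsum : (∑ i, ∑ j, (if i ≠ j then (1 - (if y i = y j then (1:ℝ) else -1) *
        Real.cos (∑ k, ω k * (x i k - x j k))) / 2 else 0))
      = (n:ℝ)^2/2 - Q + (C^2 + Sn^2)/2 := by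
    have step : ∀ i j : Fin n, (if i ≠ j then (1 - (if y i = y j then (1:ℝ) else -1) *
          Real.cos (∑ k, ω k * (x i k - x j k))) / 2 else 0)
        = 1/2 - (if y i = y j then Real.cos (f i)*Real.cos (f j) + Real.sin (f i)*Real.sin (f j) else 0)
          + (Real.cos (f i)*Real.cos (f j) + Real.sin (f i)*Real.sin (f j))/2 := by
      intro i j
      rw [hcos]
      by_cases hij : i = j
      · subst hij
        have h1 : Real.cos (f i) * Real.cos (f i) + Real.sin (f i) * Real.sin (f i) = 1 := by
          have := Real.sin_sq_add_cos_sq (f i)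
          nlinarith
        simp [h1]
        norm_num
      · by_cases hy : y i = y j <;> simp [hij, hy] <;> ring
    simp only [step]
    simp only [Finset.sum_add_distrib, Finset.sum_sub_distrib, ← Finset.sum_div]
    rw [hCC, hSS, ← hQ]
    simp [Finset.card_univ]
    ring
  rw [hsum, hQeq, hsumc, hsums]
  field_simp
  ring
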